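/- For every u > 0 and all r, z ∈ ℝ, the Gaussian kernel φ satisfies the partial differential equation ∂_u φ(z,u,r) − a·(b − r − (δ²/a²)(1−e^{−au}))·∂_r φ(z,u,r) − (δ²/2)·∂_{rr} φ(z,u,r) = 0, where the derivatives are taken with respect to u and r. -/

import Mathlib

/-!
For fixed `u > 0`, `φ(z,u,r)` is the centred Gaussian density `K(v, x)` of variance
`v(u) = (δ²/(2a))(1 - e^{-2au})`, evaluated at `x = z - m(u,r)`, where the mean `m` is affine
in `r` with slope `e^{-au}`. By the chain rule `∂_u φ = v' ∂_v K - ∂_u m ∂_x K`,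
`∂_r φ = -e^{-au} ∂_x K` and `∂_r² φ = e^{-2au} ∂_x² K`. The heat equation
`∂_v K = ½ ∂_x² K` together with `v' = δ² e^{-2au}` cancels the second-order terms, and
`∂_u m = a (b - r - (δ²/a²)(1 - e^{-au})) e^{-au}` cancels the first-order ones.
-/

open Real

/-- The Gaussian kernel `φ(z,u,r)`. -/
noncomputable def phiKer (a δ b z u r : ℝ) : ℝ :=
  (Real.sqrt (2*Real.pi*(δ^2/(2*a))*(1 - Real.exp (-(2*a*u)))))⁻¹ *
    Real.exp (-(z - r*Real.exp (-(a*u)) - b*(1 - Real.exp (-(a*u)))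
      + δ^2/(2*a^2)*(1 - Real.exp (-(a*u)))^2)^2
      / (2*(δ^2/(2*a))*(1 - Real.exp (-(2*a*u)))))

section Affine

variable {𝕜 : Type*} [NontriviallyNormedField 𝕜]

theorem deriv_comp_const_add_mul (f : 𝕜 → 𝕜) (c e r : 𝕜) :
    deriv (fun r => f (c + e * r)) r = e * deriv f (c + e * r) := by
  simpa only [deriv_comp_const_add, smul_eq_mul] using deriv_comp_mul_left e (fun y => f (c + y)) r

theorem deriv_deriv_comp_const_add_mul (f : 𝕜 → 𝕜) (c e r : 𝕜) :
    deriv (deriv fun r => f (c + e * r)) r = e ^ 2 * deriv (deriv f) (c + e * r) := by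
  rw [funext (deriv_comp_const_add_mul f c e), deriv_const_mul_field, deriv_comp_const_add_mul,
    ← mul_assoc, sq]

end Affine

noncomputable def heatKernel (v x : ℝ) : ℝ :=
  (√(2 * π * v))⁻¹ * exp (-x ^ 2 / (2 * v))

theorem hasDerivAt_heatKernel_right (v x : ℝ) :
    HasDerivAt (heatKernel v) (-(x / v) * heatKernel v x) x := by
  refine ((((hasDerivAt_id' x).pow 2).neg.div_const (2 * v)).exp.const_mul
    (√(2 * π * v))⁻¹).congr_deriv ?_
  simp only [heatKernel, Pi.neg_apply, Pi.pow_apply]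
  ring

theorem deriv_heatKernel_right (v x : ℝ) :
    deriv (heatKernel v) x = -(x / v) * heatKernel v x :=
  (hasDerivAt_heatKernel_right v x).deriv

theorem deriv_deriv_heatKernel_right (v x : ℝ) :
    deriv (deriv (heatKernel v)) x = (x ^ 2 / v ^ 2 - 1 / v) * heatKernel v x := by
  rw [funext (deriv_heatKernel_right v)]
  refine ((((hasDerivAt_id' x).div_const v).neg.mul
    (hasDerivAt_heatKernel_right v x)).congr_deriv ?_).deriv
  simp only [Pi.neg_apply]
  ring

theorem HasDerivAt.heatKernel {v x : ℝ → ℝ} {v' x' t : ℝ} (hv : HasDerivAt v v' t)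
    (hx : HasDerivAt x x' t) (hpos : 0 < v t) :
    HasDerivAt (fun s => heatKernel (v s) (x s))
      ((v' / 2 * (x t ^ 2 / v t ^ 2 - 1 / v t) - x' * (x t / v t)) *
        heatKernel (v t) (x t)) t := by
  have hw : 0 < 2 * π * v t := by positivity
  have hnorm : HasDerivAt (fun s => (√(2 * π * v s))⁻¹)
      (-(v' / (2 * v t)) * (√(2 * π * v t))⁻¹) t := by
    refine (((hv.const_mul (2 * π)).sqrt hw.ne').inv (Real.sqrt_pos.2 hw).ne').congr_deriv ?_
    rw [Real.sq_sqrt hw.le]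
    field_simp
  have hgauss : HasDerivAt (fun s => Real.exp (-x s ^ 2 / (2 * v s)))
      ((v' / 2 * (x t ^ 2 / v t ^ 2) - x' * (x t / v t)) * Real.exp (-x t ^ 2 / (2 * v t))) t := by
    refine ((((hx.pow 2).neg).div (hv.const_mul 2) (by positivity)).exp).congr_deriv ?_
    simp only [Pi.neg_apply, Pi.pow_apply, Pi.div_apply]
    field_simp
    ring
  refine (hnorm.mul hgauss).congr_deriv ?_
  simp only [_root_.heatKernel]
  ring

noncomputable def phiVariance (a δ u : ℝ) : ℝ :=
  δ ^ 2 / (2 * a) * (1 - exp (-(2 * a * u)))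

noncomputable def phiMean (a δ b u r : ℝ) : ℝ :=
  r * exp (-(a * u)) + b * (1 - exp (-(a * u))) - δ ^ 2 / (2 * a ^ 2) * (1 - exp (-(a * u))) ^ 2

theorem phiKer_eq_heatKernel (a δ b z u r : ℝ) :
    phiKer a δ b z u r = heatKernel (phiVariance a δ u) (z - phiMean a δ b u r) := by
  simp only [phiKer, heatKernel, phiVariance, phiMean]
  ring_nf

theorem sub_phiMean_eq (a δ b z u r : ℝ) :
    z - phiMean a δ b u r = z - phiMean a δ b u 0 + -exp (-(a * u)) * r := by
  simp only [phiMean]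
  ring

theorem phiKer_eq_heatKernel_affine (a δ b z u : ℝ) :
    (fun r => phiKer a δ b z u r) =
      fun r => heatKernel (phiVariance a δ u) (z - phiMean a δ b u 0 + -exp (-(a * u)) * r) := by
  funext r
  rw [phiKer_eq_heatKernel, sub_phiMean_eq]

theorem phiVariance_pos {a δ u : ℝ} (ha : a ≠ 0) (hδ : δ ≠ 0) (hu : 0 < u) :
    0 < phiVariance a δ u := by
  have h : 0 < (1 - exp (-(2 * a * u))) / a := by
    rcases ha.lt_or_gt with ha | ha
    · exact div_pos_of_neg_of_neg (sub_neg.2 (one_lt_exp_iff.2 (by nlinarith))) ha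
    · exact div_pos (sub_pos.2 (exp_lt_one_iff.2 (by nlinarith))) ha
  calc 0 < δ ^ 2 / 2 * ((1 - exp (-(2 * a * u))) / a) := by positivity
    _ = phiVariance a δ u := by simp only [phiVariance]; ring

theorem hasDerivAt_phiVariance {a : ℝ} (ha : a ≠ 0) (δ u : ℝ) :
    HasDerivAt (phiVariance a δ) (δ ^ 2 * exp (-(2 * a * u))) u := by
  refine ((((hasDerivAt_id' u).const_mul (2 * a)).neg.exp.const_sub 1).const_mul
    (δ ^ 2 / (2 * a))).congr_deriv ?_
  simp only [Pi.neg_apply]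
  field_simp

theorem hasDerivAt_phiMean {a : ℝ} (ha : a ≠ 0) (δ b u r : ℝ) :
    HasDerivAt (fun u => phiMean a δ b u r)
      (a * (b - r - δ ^ 2 / a ^ 2 * (1 - exp (-(a * u)))) * exp (-(a * u))) u := by
  have hE : HasDerivAt (fun u => exp (-(a * u))) (exp (-(a * u)) * -a) u :=
    (((hasDerivAt_id' u).const_mul a).neg.congr_deriv (by ring)).exp
  refine (((hE.const_mul r).add ((hE.const_sub 1).const_mul b)).sub
    (((hE.const_sub 1).pow 2).const_mul (δ ^ 2 / (2 * a ^ 2)))).congr_deriv ?_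
  field_simp
  ring

/-- the Gaussian kernel `φ` satisfies
`∂_u φ − a(b − r − (δ²/a²)(1−e^{−au}))·∂_r φ − (δ²/2)·∂_{rr} φ = 0`. -/
theorem phi_solves_pde (a δ b : ℝ) (ha : 0 < a) (hδ : 0 < δ) :
    ∀ u > (0:ℝ), ∀ r z : ℝ,
      deriv (fun u' => phiKer a δ b z u' r) u
        - a*(b - r - δ^2/a^2 * (1 - Real.exp (-(a*u))))
          * deriv (fun r' => phiKer a δ b z u r') r
        - δ^2/2 * deriv (deriv (fun r' => phiKer a δ b z u r')) r = 0 := by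
  intro u hu r z
  have h_time := ((hasDerivAt_phiVariance ha.ne' δ u).heatKernel
    ((hasDerivAt_phiMean ha.ne' δ b u r).const_sub z) (phiVariance_pos ha.ne' hδ.ne' hu)).deriv
  have h_exp : exp (-(2 * a * u)) = exp (-(a * u)) ^ 2 := by
    rw [← exp_nat_mul]
    ring_nf
  rw [funext fun u' => phiKer_eq_heatKernel a δ b z u' r, h_time,
    phiKer_eq_heatKernel_affine, deriv_deriv_comp_const_add_mul, deriv_comp_const_add_mul,
    ← sub_phiMean_eq, deriv_heatKernel_right, deriv_deriv_heatKernel_right, h_exp]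
  ring
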